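/- For every signal f, MTL formulas φ1 and φ2, intervals K and J of nonnegative reals, index i ∈ {1,2,3,4}, and every t ∈ Qⁱ(φ1,φ2,K,J): f^t ⊨ φ1 R_J φ2 under the new satisfaction relation. -/

import Mathlib

open scoped NNReal ENNReal
open Set

namespace MITL

/-- A signal assigns to each nonnegative real time the set of atomic
propositions true at that time. -/
abbrev Signal (AP : Type*) := ℝ≥0 → Set AP

/-- The shifted signal `f^r`, defined by `f^r(t) = f(r+t)`. -/
def shift {AP : Type*} (f : Signal AP) (r : ℝ≥0) : Signal AP := fun t => f (r + t)

/-- MTL formulas over atomic propositions `AP`; the timing constraints are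
(intended to be) intervals of nonnegative reals. -/
inductive MTL (AP : Type*) where
  | top : MTL AP
  | bot : MTL AP
  | atom : AP → MTL AP
  | neg : MTL AP → MTL AP
  | disj : MTL AP → MTL AP → MTL AP
  | conj : MTL AP → MTL AP → MTL AP
  | until_ : MTL AP → MTL AP → Set ℝ≥0 → MTL AP
  | release : MTL AP → MTL AP → Set ℝ≥0 → MTL AP

variable {AP : Type*}

/-- The NEW satisfaction relation: `NSat f φ` means `f ⊨ φ`. -/
def NSat : Signal AP → MTL AP → Prop
  | _, .top => True
  | _, .bot => False
  | f, .atom p => p ∈ f 0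
  | f, .neg φ => ¬ NSat f φ
  | f, .disj φ1 φ2 => NSat f φ1 ∨ NSat f φ2
  | f, .conj φ1 φ2 => NSat f φ1 ∧ NSat f φ2
  | f, .until_ φ1 φ2 I =>
      ∃ t1 ∈ I, NSat (shift f t1) φ2 ∧ ∀ t2 ∈ Set.Ioo 0 t1, NSat (shift f t2) φ1
  | f, .release φ1 φ2 I =>
      (∀ t1 ∈ I, NSat (shift f t1) φ2) ∨
      (∃ t1 : ℝ≥0, 0 < t1 ∧ NSat (shift f t1) φ1 ∧
        ∀ t2 ∈ Set.Ioc 0 t1 ∩ I, NSat (shift f t2) φ2) ∨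
      (∃ t1 ∈ I ∪ {sInf I}, ∃ t2 ∈ I, t1 < t2 ∧
        ∀ t3 ∈ I, (t3 ≤ t1 → NSat (shift f t3) φ2) ∧
          (t1 < t3 → t3 ≤ t2 → NSat (shift f t3) φ1))

/-- Finite variability from the right of a signal `f` with respect to a formula
`φ`, relative to a satisfaction relation `Sat`. -/
def FinVarRight (Sat : Signal AP → MTL AP → Prop) (f : Signal AP) (φ : MTL AP) : Prop :=
  ∀ r : ℝ≥0,
    (∀ ε : ℝ≥0, 0 < ε → ∃ t ∈ Set.Ioo r (r + ε), Sat (shift f t) φ) →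
    ∃ ε : ℝ≥0, 0 < ε ∧ ∀ t ∈ Set.Ioo r (r + ε), Sat (shift f t) φ

/-- Finite variability from the left of a signal `f` with respect to a formula
`φ`, relative to a satisfaction relation `Sat`. -/
def FinVarLeft (Sat : Signal AP → MTL AP → Prop) (f : Signal AP) (φ : MTL AP) : Prop :=
  ∀ r : ℝ≥0, 0 < r →
    (∀ ε ∈ Set.Ioo 0 r, ∃ t ∈ Set.Ioo (r - ε) r, Sat (shift f t) φ) →
    ∃ ε ∈ Set.Ioo 0 r, ∀ t ∈ Set.Ioo (r - ε) r, Sat (shift f t) φ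

/-- Release witness sets: `K ∈ RW f φ1 φ2 i` says that the interval `K` is a
type-`i` release witness (`i ∈ {1,2,3,4}`).  Boundedness above of `K`
expresses `sup K < ∞`. -/
def RW (f : Signal AP) (φ1 φ2 : MTL AP) : ℕ → Set (Set ℝ≥0)
  | 1 => {K | ∀ t ∈ K, NSat (shift f t) φ2}
  | 2 => {K | K.Nonempty ∧ sInf K ∈ K ∧ ∀ t ∈ K, NSat (shift f t) φ1}
  | 3 => {K | K.Nonempty ∧ BddAbove K ∧ sSup K ∈ K ∧
      (∀ t ∈ K, NSat (shift f t) φ2) ∧ NSat (shift f (sSup K)) φ1}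
  | 4 => {K | (K ∪ {sInf K}).Nonempty ∧ (¬ BddAbove K ∨ sSup K ∈ K) ∧
      (∀ t ∈ K, NSat (shift f t) φ2) ∧
      (BddAbove K → ∃ ε : ℝ≥0, 0 < ε ∧
        ∀ t ∈ Set.Ioo (sSup K) (sSup K + ε), NSat (shift f t) φ1)}
  | _ => ∅

/-- The set `t + J = {t + s : s ∈ J}`. -/
def addSet (t : ℝ≥0) (J : Set ℝ≥0) : Set ℝ≥0 := (fun s => t + s) '' J

/-- The set `K + ℝ≥0 = {a + b : a ∈ K, b ≥ 0}`. -/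
def upSet (K : Set ℝ≥0) : Set ℝ≥0 := {x | ∃ a ∈ K, ∃ b : ℝ≥0, x = a + b}

/-- Release proof sets `Qⁱ(φ1,φ2,K,J)` for `i ∈ {1,2,3,4}`.  The conditions
`t < sup K` and `t ≤ sup K` are trivially true when `K` is unbounded above
(its supremum then being `∞`). -/
def RQ (f : Signal AP) (φ1 φ2 : MTL AP) (K J : Set ℝ≥0) : ℕ → Set ℝ≥0
  | 1 => {t | K ∈ RW f φ1 φ2 1 ∧ addSet t J ⊆ K}
  | 2 => {t | K ∈ RW f φ1 φ2 2 ∧ addSet t J ⊆ Set.Ioi (sInf K) ∧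
      (BddAbove K → t < sSup K) ∧ 0 < sInf J}
  | 3 => {t | K ∈ RW f φ1 φ2 3 ∧ addSet t J ⊆ upSet K ∧ t < sSup K}
  | 4 => {t | K ∈ RW f φ1 φ2 4 ∧ addSet t J ⊆ upSet K ∧ (BddAbove K → t ≤ sSup K)}
  | _ => ∅

/-!
After shifting by `t`, each type of release witness yields one disjunct of the release
semantics. Types 2 and 3 give the second one, with the `φ1`-point at `inf K`, just after `t`
inside `K`, or at `sup K`; before that point `t + J` is empty (type 2) or runs inside `K`
(type 3). For type 4 with `K` bounded put `d = sup K - t`: `φ2` holds on `J ∩ [0, d]` and `φ1`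
on `(d, d + ε)`, and the convexity of `J` decides which disjunct applies.
-/

lemma shift_shift (f : Signal AP) (r s : ℝ≥0) :
    shift (shift f r) s = shift f (r + s) :=
  funext fun x => by simp only [shift, add_assoc]

lemma mem_of_mem_upSet_of_le {K : Set ℝ≥0} (hK : K.OrdConnected) {x u : ℝ≥0}
    (hx : x ∈ upSet K) (hu : u ∈ K) (hxu : x ≤ u) : x ∈ K := by
  obtain ⟨a, ha, b, rfl⟩ := hx
  exact hK.out ha hu ⟨le_self_add, hxu⟩

lemma exists_mem_gt_of_lt_csSup {α : Type*} [ConditionallyCompleteLinearOrder α] {K : Set α}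
    (hK : K.Nonempty) {t : α}
    (ht : BddAbove K → t < sSup K) : ∃ u ∈ K, t < u := by
  by_cases hb : BddAbove K
  · exact exists_lt_of_lt_csSup hK (ht hb)
  · simpa using not_bddAbove_iff.mp hb t

section Release

variable {g : Signal AP} {φ1 φ2 : MTL AP} {J : Set ℝ≥0}

lemma nsat_release_of_forall (h : ∀ s ∈ J, NSat (shift g s) φ2) :
    NSat g (.release φ1 φ2 J) :=
  Or.inl h

lemma nsat_release_of_pos {r : ℝ≥0} (hr : 0 < r) (h1 : NSat (shift g r) φ1)
    (h2 : ∀ s ∈ J, s ≤ r → NSat (shift g s) φ2) : NSat g (.release φ1 φ2 J) :=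
  Or.inr <| Or.inl ⟨r, hr, h1, fun s ⟨⟨_, hsr⟩, hs⟩ => h2 s hs hsr⟩

lemma nsat_release_of_pos_of_lt {r : ℝ≥0} (hr : 0 < r) (h1 : NSat (shift g r) φ1)
    (hJ : ∀ s ∈ J, r < s) : NSat g (.release φ1 φ2 J) :=
  nsat_release_of_pos hr h1 fun s hs hsr => absurd hsr (hJ s hs).not_ge

lemma nsat_release_of_lt {r r' : ℝ≥0} (hr : r ∈ J ∪ {sInf J}) (hr' : r' ∈ J) (hrr' : r < r')
    (h2 : ∀ s ∈ J, s ≤ r → NSat (shift g s) φ2)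
    (h1 : ∀ s ∈ J, r < s → s ≤ r' → NSat (shift g s) φ1) : NSat g (.release φ1 φ2 J) :=
  Or.inr <| Or.inr ⟨r, hr, r', hr', hrr', fun s hs => ⟨h2 s hs, h1 s hs⟩⟩

/-- By convexity of `J`, either `J ⊆ [0, d]` (disjunct (i)), or `d ∈ J` and `J` extends past `d`
((iii) with `t1 = d`), or `J ⊆ (d, ∞)` ((ii) if `inf J > d`, (iii) with `t1 = inf J` if not). -/
lemma nsat_release_of_split (hJ : J.OrdConnected) {d ε : ℝ≥0} (hε : 0 < ε)
    (h2 : ∀ s ∈ J, s ≤ d → NSat (shift g s) φ2)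
    (h1 : ∀ s ∈ Ioo d (d + ε), NSat (shift g s) φ1) : NSat g (.release φ1 φ2 J) := by
  by_cases hle : ∀ s ∈ J, s ≤ d
  · exact nsat_release_of_forall fun s hs => h2 s hs (hle s hs)
  push Not at hle
  obtain ⟨s₀, hs₀, hds₀⟩ := hle
  have hdε : d < d + ε := lt_add_of_pos_right d hε
  by_cases hbelow : ∃ p ∈ J, p ≤ d
  · obtain ⟨p, hp, hpd⟩ := hbelow
    have hd : d ∈ J := hJ.out hp hs₀ ⟨hpd, hds₀.le⟩
    obtain ⟨r, hdr, hr⟩ := exists_between (lt_min hds₀ hdε)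
    refine nsat_release_of_lt (Or.inl hd)
      (hJ.out hd hs₀ ⟨hdr.le, (hr.trans_le (min_le_left _ _)).le⟩) hdr h2 fun s _ hds hsr => h1 s ⟨hds, hsr.trans_lt (hr.trans_le (min_le_right _ _))⟩
  push Not at hbelow
  have hdJ : d ≤ sInf J := le_csInf ⟨s₀, hs₀⟩ fun s hs => (hbelow s hs).le
  rcases hdJ.lt_or_eq with hdJ | rfl
  · obtain ⟨r, hdr, hr⟩ := exists_between (lt_min hdJ hdε)
    exact nsat_release_of_pos_of_lt (pos_of_gt hdr) (h1 r ⟨hdr, hr.trans_le (min_le_right _ _)⟩)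
      fun s hs => (hr.trans_le (min_le_left _ _)).trans_le (csInf_le (OrderBot.bddBelow J) hs)
  · obtain ⟨r, hr, hrε⟩ := exists_lt_of_csInf_lt ⟨s₀, hs₀⟩ hdε
    exact nsat_release_of_lt (Or.inr rfl) hr (hbelow r hr)
      (fun s hs hsd => absurd hsd (hbelow s hs).not_ge)
      fun s _ hds hsr => h1 s ⟨hds, hsr.trans_lt hrε⟩

end Release

section ProofSets

variable {f : Signal AP} {φ1 φ2 : MTL AP} {K J : Set ℝ≥0} {t : ℝ≥0}

lemma nsat_release_of_mem_RQ_one (ht : t ∈ RQ f φ1 φ2 K J 1) :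
    NSat (shift f t) (.release φ1 φ2 J) := by
  obtain ⟨hφ2, hJK⟩ := ht
  exact nsat_release_of_forall fun s hs => by
    rw [shift_shift]; exact hφ2 _ (hJK (mem_image_of_mem _ hs))

lemma nsat_release_of_mem_RQ_two (hK : K.OrdConnected) (ht : t ∈ RQ f φ1 φ2 K J 2) :
    NSat (shift f t) (.release φ1 φ2 J) := by
  obtain ⟨⟨hKne, hInf, hφ1⟩, hJK, htK, hJpos⟩ := ht
  rcases lt_or_ge t (sInf K) with htInf | htInf
  · refine nsat_release_of_pos_of_lt (r := sInf K - t) (tsub_pos_of_lt htInf) ?_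
      fun s hs => (tsub_lt_iff_left htInf.le).mpr (hJK (mem_image_of_mem _ hs))
    rw [shift_shift, add_tsub_cancel_of_le htInf.le]
    exact hφ1 _ hInf
  · obtain ⟨u, hu, htu⟩ := exists_mem_gt_of_lt_csSup hKne htK
    obtain ⟨r, hr0, hr⟩ := exists_between (lt_min (tsub_pos_of_lt htu) hJpos)
    refine nsat_release_of_pos_of_lt hr0 ?_
      fun s hs => hr.trans_le ((min_le_right _ _).trans (csInf_le (OrderBot.bddBelow J) hs))
    rw [shift_shift]
    exact hφ1 _ (hK.out hInf hu
      ⟨htInf.trans le_self_add, (lt_tsub_iff_left.mp (hr.trans_le (min_le_left _ _))).le⟩)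

lemma nsat_release_of_mem_RQ_three (hK : K.OrdConnected) (ht : t ∈ RQ f φ1 φ2 K J 3) :
    NSat (shift f t) (.release φ1 φ2 J) := by
  obtain ⟨⟨-, -, hSup, hφ2, hφ1⟩, hJK, htSup⟩ := ht
  refine nsat_release_of_pos (r := sSup K - t) (tsub_pos_of_lt htSup) ?_ fun s hs hsr => ?_
  · rwa [shift_shift, add_tsub_cancel_of_le htSup.le]
  · rw [shift_shift]
    exact hφ2 _ (mem_of_mem_upSet_of_le hK (hJK (mem_image_of_mem _ hs)) hSup
      ((le_tsub_iff_left htSup.le).mp hsr))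

lemma nsat_release_of_mem_RQ_four (hK : K.OrdConnected) (hJ : J.OrdConnected)
    (ht : t ∈ RQ f φ1 φ2 K J 4) : NSat (shift f t) (.release φ1 φ2 J) := by
  obtain ⟨⟨-, hSup, hφ2, hφ1⟩, hJK, htSup⟩ := ht
  by_cases hb : BddAbove K
  · have hSup := hSup.resolve_left (not_not_intro hb)
    have htm := htSup hb
    obtain ⟨ε, hε, hφ1ε⟩ := hφ1 hb
    refine nsat_release_of_split hJ (d := sSup K - t) hε (fun s hs hsd => ?_) fun s hs => ?_
    · rw [shift_shift]
      exact hφ2 _ (mem_of_mem_upSet_of_le hK (hJK (mem_image_of_mem _ hs)) hSup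
        ((le_tsub_iff_left htm).mp hsd))
    · obtain ⟨hs₁, hs₂⟩ := hs
      rw [tsub_add_eq_add_tsub htm] at hs₂
      rw [shift_shift]
      exact hφ1ε _ ⟨(tsub_lt_iff_left htm).mp hs₁, lt_tsub_iff_left.mp hs₂⟩
  · refine nsat_release_of_forall fun s hs => ?_
    obtain ⟨u, hu, hsu⟩ := not_bddAbove_iff.mp hb (t + s)
    rw [shift_shift]
    exact hφ2 _ (mem_of_mem_upSet_of_le hK (hJK (mem_image_of_mem _ hs)) hu hsu.le)

end ProofSets

theorem release_proofset_sound_general (f : Signal AP) (φ1 φ2 : MTL AP)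
    (K J : Set ℝ≥0) (hK : K.OrdConnected) (hJ : J.OrdConnected)
    (i : ℕ) (t : ℝ≥0) (ht : t ∈ RQ f φ1 φ2 K J i) :
    NSat (shift f t) (.release φ1 φ2 J) :=
  match i, ht with
  | 1, ht => nsat_release_of_mem_RQ_one ht
  | 2, ht => nsat_release_of_mem_RQ_two hK ht
  | 3, ht => nsat_release_of_mem_RQ_three hK ht
  | 4, ht => nsat_release_of_mem_RQ_four hK hJ ht
  | _ + 5, ht => ht.elim

theorem release_proofset_sound (f : Signal AP) (φ1 φ2 : MTL AP)
    (K J : Set ℝ≥0) (hK : K.OrdConnected) (hJ : J.OrdConnected)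
    (i : ℕ) (hi : i ∈ ({1, 2, 3, 4} : Set ℕ))
    (t : ℝ≥0) (ht : t ∈ RQ f φ1 φ2 K J i) :
    NSat (shift f t) (.release φ1 φ2 J) :=
  release_proofset_sound_general f φ1 φ2 K J hK hJ i t ht

end MITL
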